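/- Let S ∈ I₁ ∩ I₂ with exchange graph G(S) of shortest s–t distance 2(ℓ+1), and let Π = (B₁, A₁, …, A_ℓ, B_{ℓ+1}) be an augmenting set. Then there exists a directed path p = (s, b₁, a₁, b₂, …, b_ℓ, a_ℓ, b_{ℓ+1}, t) in G(S) with b_k ∈ B_k and a_k ∈ A_k for all k. -/

import Mathlib

open Classical

noncomputable section

structure FinMatroid (α : Type*) where
  Indep : Finset α → Prop
  empty_indep : Indep ∅
  subset_indep : ∀ ⦃A B : Finset α⦄, Indep A → B ⊆ A → Indep B
  exchange : ∀ ⦃A B : Finset α⦄, Indep A → Indep B → A.card < B.card →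
    ∃ b ∈ B \ A, Indep (insert b A)

variable {α : Type*} [DecidableEq α]

/-- The rank of a set `T`: the maximum cardinality of an independent subset of `T`. -/
def FinMatroid.rank (M : FinMatroid α) (T : Finset α) : ℕ :=
  (T.powerset.filter fun A => M.Indep A).sup Finset.card

/-- Vertices of the exchange graph: a source `src`, a sink `snk`, and the ground elements. -/
inductive EGV (α : Type*) where
  | src : EGV α
  | snk : EGV α
  | el : α → EGV α

/-- Arcs of the exchange graph `G(S)` for `S ∈ I₁ ∩ I₂`. -/
def egAdj (M₁ M₂ : FinMatroid α) (S : Finset α) : EGV α → EGV α → Prop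
  | EGV.src, EGV.el b => b ∉ S ∧ M₁.Indep (insert b S)
  | EGV.el b, EGV.snk => b ∉ S ∧ M₂.Indep (insert b S)
  | EGV.el x, EGV.el y =>
      (x ∈ S ∧ y ∉ S ∧ M₁.Indep (insert y (S.erase x))) ∨
      (x ∉ S ∧ y ∈ S ∧ M₂.Indep (insert x (S.erase y)))
  | _, _ => False

/-- Directed shortest-path distance in the exchange graph (number of arcs), `⊤` if unreachable. -/
def egDist (M₁ M₂ : FinMatroid α) (S : Finset α) (u v : EGV α) : ℕ∞ :=
  sInf {n : ℕ∞ | ∃ l : List (EGV α),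
    List.Chain' (egAdj M₁ M₂ S) (u :: (l ++ [v])) ∧ n = (l.length : ℕ∞) + 1}

/-- An augmenting set `(B 1, A 1, B 2, …, A ℓ, B (ℓ+1))` of width `w` in the exchange graph
`G(S)`: pairwise disjoint sets with `A k ⊆ D_{2k}`, `B k ⊆ D_{2k-1}` (distance layers from the
source), all of cardinality `w`, with `S + B₁ ∈ I₁`, `S + B_{ℓ+1} ∈ I₂`,
`S − A_k + B_{k+1} ∈ I₁` and `S − A_k + B_k ∈ I₂`. -/
def IsAugSet (M₁ M₂ : FinMatroid α) (S : Finset α) (ℓ w : ℕ)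
    (A B : ℕ → Finset α) : Prop :=
  (∀ k ∈ Finset.Icc 1 ℓ, ∀ a ∈ A k,
      egDist M₁ M₂ S EGV.src (EGV.el a) = ((2 * k : ℕ) : ℕ∞)) ∧
  (∀ k ∈ Finset.Icc 1 (ℓ + 1), ∀ b ∈ B k,
      egDist M₁ M₂ S EGV.src (EGV.el b) = ((2 * k - 1 : ℕ) : ℕ∞)) ∧
  (∀ i ∈ Finset.Icc 1 ℓ, ∀ j ∈ Finset.Icc 1 ℓ, i ≠ j → Disjoint (A i) (A j)) ∧
  (∀ i ∈ Finset.Icc 1 (ℓ + 1), ∀ j ∈ Finset.Icc 1 (ℓ + 1), i ≠ j → Disjoint (B i) (B j)) ∧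
  (∀ i ∈ Finset.Icc 1 ℓ, ∀ j ∈ Finset.Icc 1 (ℓ + 1), Disjoint (A i) (B j)) ∧
  (∀ k ∈ Finset.Icc 1 ℓ, (A k).card = w) ∧
  (∀ k ∈ Finset.Icc 1 (ℓ + 1), (B k).card = w) ∧
  M₁.Indep (S ∪ B 1) ∧
  M₂.Indep (S ∪ B (ℓ + 1)) ∧
  (∀ k ∈ Finset.Icc 1 ℓ, M₁.Indep ((S \ A k) ∪ B (k + 1))) ∧
  (∀ k ∈ Finset.Icc 1 ℓ, M₂.Indep ((S \ A k) ∪ B k))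

/-!
Distances from the source in `G(S)` alternate between `S` and its complement, so `A_k ⊆ S` and
`B_k ∩ S = ∅`. Every `b ∈ B_k` has an arc into `A_k`: extending `S - A_k + b ∈ I₂` to an
independent set of size `|S|` inside `S + b` drops a single element of `S`, which lies in `A_k`.
Every `a ∈ A_k` has an arc into `B_{k+1}`: augmenting `S - a` from `S - A_k + B_{k+1} ∈ I₁` must
add an element of `B_{k+1}`. Following such arcs from any `b₁ ∈ B₁` gives the path; its first
and last arcs come from `S + B₁ ∈ I₁` and `S + B_{ℓ+1} ∈ I₂`.
-/

open Finset

/- `src` and `snk` are placed on the `S` side, so that every arc of `G(S)` changes side and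
the side of a vertex records the parity of its distance from `src`. -/
def egSide (S : Finset α) : EGV α → Prop
  | EGV.src => True
  | EGV.snk => True
  | EGV.el x => x ∈ S

lemma egSide_iff_not_of_egAdj {M₁ M₂ : FinMatroid α} {S : Finset α} {u v : EGV α}
    (h : egAdj M₁ M₂ S u v) : egSide S v ↔ ¬ egSide S u := by
  cases u <;> cases v <;> simp only [egAdj, egSide] at h ⊢ <;> tauto

lemma List.IsChain.iff_iff_even_of_flip {β : Type*} {r : β → β → Prop} {p : β → Prop}
    (hr : ∀ ⦃u v⦄, r u v → (p v ↔ ¬ p u)) :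
    ∀ (l : List β) (u v : β), List.IsChain r (u :: (l ++ [v])) →
      (p v ↔ (p u ↔ Even (l.length + 1)))
  | [], u, v, h => by
    have := hr (List.isChain_pair.1 h)
    simp only [List.length_nil, zero_add, Nat.not_even_one, iff_false]
    tauto
  | w :: l, u, v, h => by
    rw [List.cons_append, List.isChain_cons_cons] at h
    have huw := hr h.1
    have hwv := List.IsChain.iff_iff_even_of_flip hr l w v h.2
    simp only [List.length_cons, Nat.even_add_one] at hwv ⊢
    tauto

lemma exists_isChain_of_egDist_eq {M₁ M₂ : FinMatroid α} {S : Finset α} {u v : EGV α} {n : ℕ}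
    (h : egDist M₁ M₂ S u v = n) :
    ∃ l : List (EGV α), List.IsChain (egAdj M₁ M₂ S) (u :: (l ++ [v])) ∧ l.length + 1 = n := by
  have hne : {m : ℕ∞ | ∃ l : List (EGV α),
      List.Chain' (egAdj M₁ M₂ S) (u :: (l ++ [v])) ∧ m = (l.length : ℕ∞) + 1}.Nonempty :=
    Set.nonempty_iff_ne_empty.2 fun hempty => by simp [egDist, hempty] at h
  obtain ⟨l, hl, hlen⟩ := csInf_mem hne
  refine ⟨l, hl, ?_⟩
  have : (n : ℕ∞) = l.length + 1 := by rw [← h]; exact hlen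
  exact_mod_cast this.symm

lemma mem_iff_even_of_egDist_eq {M₁ M₂ : FinMatroid α} {S : Finset α} {x : α} {n : ℕ}
    (h : egDist M₁ M₂ S EGV.src (EGV.el x) = n) : x ∈ S ↔ Even n := by
  obtain ⟨l, hl, rfl⟩ := exists_isChain_of_egDist_eq h
  simpa [egSide] using
    List.IsChain.iff_iff_even_of_flip (r := egAdj M₁ M₂ S) (p := egSide S)
      (fun _ _ => egSide_iff_not_of_egAdj) l _ _ hl

namespace FinMatroid

variable (M : FinMatroid α)

/- `exchange` is stated with the classical `DecidableEq` instance; this is it for the ambient one. -/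
lemma exists_mem_sdiff_insert_indep {X T : Finset α} (hX : M.Indep X) (hT : M.Indep T)
    (hlt : X.card < T.card) : ∃ e ∈ T \ X, M.Indep (insert e X) := by
  obtain ⟨e, he, hI⟩ := M.exchange hX hT hlt
  exact ⟨e, by convert he, by convert hI⟩

lemma indep_insert_of_indep_union {T U : Finset α} {b : α} (h : M.Indep (T ∪ U)) (hb : b ∈ U) :
    M.Indep (insert b T) :=
  M.subset_indep h (insert_subset (mem_union_right _ hb) subset_union_left)

lemma exists_indep_superset_card_eq {X T : Finset α} (hX : M.Indep X) (hT : M.Indep T)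
    (hle : X.card ≤ T.card) : ∃ Y, X ⊆ Y ∧ Y ⊆ X ∪ T ∧ M.Indep Y ∧ Y.card = T.card := by
  induction h : T.card - X.card generalizing X with
  | zero => exact ⟨X, subset_rfl, subset_union_left, hX, by omega⟩
  | succ n ih =>
    obtain ⟨e, he, hXe⟩ := M.exists_mem_sdiff_insert_indep hX hT (by omega)
    rw [mem_sdiff] at he
    have hcard := card_insert_of_notMem he.2
    obtain ⟨Y, hXY, hYXT, hY, hYc⟩ := ih hXe (by omega) (by omega)
    refine ⟨Y, (subset_insert e X).trans hXY, hYXT.trans ?_, hY, hYc⟩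
    rw [insert_union]
    exact insert_subset (mem_union_right _ he.1) subset_rfl

/- Completing `X` to an independent set of size `|S|` inside `S + b` drops exactly one element
`a` of `S`, which lies outside `X`; the completion is then `S - a + b`. -/
lemma exists_insert_erase_indep {S X : Finset α} {b : α} (hS : M.Indep S) (hX : M.Indep X)
    (hbS : b ∉ S) (hbX : b ∈ X) (hXS : X ⊆ insert b S) {a₀ : α} (ha₀S : a₀ ∈ S)
    (ha₀X : a₀ ∉ X) : ∃ a ∈ S, a ∉ X ∧ M.Indep (insert b (S.erase a)) := by
  have hXc : X.card ≤ S.card := by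
    have := card_lt_card (ssubset_of_subset_of_ne hXS (by grind))
    rw [card_insert_of_notMem hbS] at this
    omega
  obtain ⟨Y, hXY, hYXS, hY, hYc⟩ := M.exists_indep_superset_card_eq hX hS hXc
  have hYbS : Y ⊆ insert b S := hYXS.trans (union_subset hXS (subset_insert b S))
  obtain ⟨a, haY, hYa⟩ : ∃ a ∉ Y, insert a Y = insert b S :=
    exists_eq_insert_iff.2 ⟨hYbS, by rw [hYc, card_insert_of_notMem hbS]⟩
  have haS : a ∈ S := by
    have := hYa ▸ mem_insert_self a Y
    exact (mem_insert.1 this).resolve_left (by rintro rfl; exact haY (hXY hbX))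
  refine ⟨a, haS, fun haX => haY (hXY haX), M.subset_indep hY ?_⟩
  intro y hy
  have : y ∈ insert a Y := by rw [hYa]; grind
  grind

lemma exists_mem_removable_of_sdiff_union {S A B : Finset α} (hS : M.Indep S)
    (hSAB : M.Indep ((S \ A) ∪ B)) (hAS : A ⊆ S) (hA : A.Nonempty) {b : α} (hb : b ∈ B)
    (hbS : b ∉ S) : ∃ a ∈ A, M.Indep (insert b (S.erase a)) := by
  obtain ⟨a₀, ha₀⟩ := hA
  obtain ⟨a, haS, haX, hI⟩ := M.exists_insert_erase_indep hS
    (M.indep_insert_of_indep_union hSAB hb) hbS (mem_insert_self b _)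
    (insert_subset_insert b sdiff_subset) (hAS ha₀) (by grind)
  exact ⟨a, by grind, hI⟩

/- Augmenting `S - a` from the larger set `S - A + B` must use an element of `B`. -/
lemma exists_mem_insertable_of_sdiff_union {S A B : Finset α} (hS : M.Indep S)
    (hSAB : M.Indep ((S \ A) ∪ B)) (hAS : A ⊆ S) (hBS : Disjoint B S)
    (hAB : A.card ≤ B.card) {a : α} (ha : a ∈ A) :
    ∃ b ∈ B, M.Indep (insert b (S.erase a)) := by
  have hcard : S.card ≤ ((S \ A) ∪ B).card := by
    rw [card_union_of_disjoint (hBS.symm.mono_left sdiff_subset), card_sdiff_of_subset hAS]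
    have := card_le_card hAS
    omega
  have hlt : (S.erase a).card < ((S \ A) ∪ B).card := by
    rw [card_erase_of_mem (hAS ha)]
    have := card_pos.2 ⟨a, hAS ha⟩
    omega
  obtain ⟨e, he, hI⟩ :=
    M.exists_mem_sdiff_insert_indep (M.subset_indep hS (erase_subset a S)) hSAB hlt
  have heB : e ∈ B := by
    simp only [mem_sdiff, mem_union, mem_erase] at he
    grind
  exact ⟨e, heB, hI⟩

end FinMatroid

lemma exists_alternating_path {β : Type*} (r : β → β → Prop) (ℓ : ℕ) (A B : ℕ → Set β)
    (hB₁ : (B 1).Nonempty) (hBA : ∀ k ∈ Icc 1 ℓ, ∀ x ∈ B k, ∃ y ∈ A k, r x y)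
    (hAB : ∀ k ∈ Icc 1 ℓ, ∀ y ∈ A k, ∃ z ∈ B (k + 1), r y z) :
    ∃ b a : ℕ → β,
      (∀ k ∈ Icc 1 (ℓ + 1), b k ∈ B k) ∧ (∀ k ∈ Icc 1 ℓ, a k ∈ A k) ∧
      (∀ k ∈ Icc 1 ℓ, r (b k) (a k)) ∧ (∀ k ∈ Icc 1 ℓ, r (a k) (b (k + 1))) := by
  obtain ⟨b₁, hb₁⟩ := hB₁
  have : Nonempty β := ⟨b₁⟩
  choose! g hgA hgr using hBA
  choose! f hfB hfr using hAB
  -- `c k` is the path's element of `B (k + 1)`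
  let c : ℕ → β := fun n => Nat.rec b₁ (fun k x => f (k + 1) (g (k + 1) x)) n
  have hc : ∀ k ≤ ℓ, c k ∈ B (k + 1) := by
    intro k
    induction k with
    | zero => exact fun _ => hb₁
    | succ k ih =>
      intro hk
      have hk' : k + 1 ∈ Icc 1 ℓ := mem_Icc.2 ⟨by omega, hk⟩
      exact hfB _ hk' _ (hgA _ hk' _ (ih (by omega)))
  refine ⟨fun k => c (k - 1), fun k => g k (c (k - 1)), ?_, ?_, ?_, ?_⟩ <;>
    intro k hk <;> obtain ⟨j, rfl⟩ : ∃ j, k = j + 1 := ⟨k - 1, by grind⟩ <;>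
    simp only [mem_Icc, Nat.add_sub_cancel] at hk ⊢
  · exact hc j (by omega)
  · exact hgA _ (by simpa using hk) _ (hc j (by omega))
  · exact hgr _ (by simpa using hk) _ (hc j (by omega))
  · exact hfr _ (by simpa using hk) _ (hgA _ (by simpa using hk) _ (hc j (by omega)))

namespace IsAugSet

variable {M₁ M₂ : FinMatroid α} {S : Finset α} {ℓ w : ℕ} {A B : ℕ → Finset α}
  (hAug : IsAugSet M₁ M₂ S ℓ w A B)
include hAug

lemma subset {k : ℕ} (hk : k ∈ Icc 1 ℓ) : A k ⊆ S := fun x hx =>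
  (mem_iff_even_of_egDist_eq (hAug.1 k hk x hx)).2 (even_two_mul k)

lemma disjoint {k : ℕ} (hk : k ∈ Icc 1 (ℓ + 1)) : Disjoint (B k) S :=
  disjoint_left.2 fun x hx hxS => by
    have := (mem_iff_even_of_egDist_eq (hAug.2.1 k hk x hx)).1 hxS
    have := (mem_Icc.1 hk).1
    grind

lemma nonempty_B (hw : 1 ≤ w) {k : ℕ} (hk : k ∈ Icc 1 (ℓ + 1)) : (B k).Nonempty := by
  have ⟨_, _, _, _, _, _, hBw, _, _, _, _⟩ := hAug
  exact card_pos.1 (by rw [hBw k hk]; omega)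

lemma egAdj_src {b : α} (hb : b ∈ B 1) : egAdj M₁ M₂ S EGV.src (EGV.el b) := by
  have ⟨_, _, _, _, _, _, _, hB₁, _, _, _⟩ := hAug
  exact ⟨disjoint_left.1 (hAug.disjoint (by simp)) hb, M₁.indep_insert_of_indep_union hB₁ hb⟩

lemma egAdj_snk {b : α} (hb : b ∈ B (ℓ + 1)) : egAdj M₁ M₂ S (EGV.el b) EGV.snk := by
  have ⟨_, _, _, _, _, _, _, _, hBℓ, _, _⟩ := hAug
  exact ⟨disjoint_left.1 (hAug.disjoint (by simp)) hb, M₂.indep_insert_of_indep_union hBℓ hb⟩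

lemma exists_egAdj_of_mem_B (hS₂ : M₂.Indep S) (hw : 1 ≤ w) {k : ℕ} (hk : k ∈ Icc 1 ℓ)
    {x : α} (hx : x ∈ B k) : ∃ y ∈ A k, egAdj M₁ M₂ S (EGV.el x) (EGV.el y) := by
  have ⟨_, _, _, _, _, hAw, _, _, _, _, hI₂⟩ := hAug
  have hxS := disjoint_left.1 (hAug.disjoint (by grind)) hx
  have hA : (A k).Nonempty := card_pos.1 (by rw [hAw k hk]; omega)
  obtain ⟨y, hy, hI⟩ := M₂.exists_mem_removable_of_sdiff_union hS₂ (hI₂ k hk) (hAug.subset hk)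
    hA hx hxS
  exact ⟨y, hy, Or.inr ⟨hxS, hAug.subset hk hy, hI⟩⟩

lemma exists_egAdj_of_mem_A (hS₁ : M₁.Indep S) {k : ℕ} (hk : k ∈ Icc 1 ℓ) {y : α}
    (hy : y ∈ A k) : ∃ z ∈ B (k + 1), egAdj M₁ M₂ S (EGV.el y) (EGV.el z) := by
  have ⟨_, _, _, _, _, hAw, hBw, _, _, hI₁, _⟩ := hAug
  have hk' : k + 1 ∈ Icc 1 (ℓ + 1) := by grind
  obtain ⟨z, hz, hI⟩ := M₁.exists_mem_insertable_of_sdiff_union hS₁ (hI₁ k hk) (hAug.subset hk)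
    (hAug.disjoint hk') (by rw [hAw k hk, hBw (k + 1) hk']) hy
  exact ⟨z, hz, Or.inl ⟨hAug.subset hk hy, disjoint_left.1 (hAug.disjoint hk') hz, hI⟩⟩

end IsAugSet

theorem augset_contains_path_general (M₁ M₂ : FinMatroid α) (S : Finset α) (ℓ w : ℕ)
    (A B : ℕ → Finset α)
    (hS₁ : M₁.Indep S) (hS₂ : M₂.Indep S)
    (hw : 1 ≤ w)
    (hAug : IsAugSet M₁ M₂ S ℓ w A B) :
    ∃ b a : ℕ → α,
      (∀ k ∈ Finset.Icc 1 (ℓ + 1), b k ∈ B k) ∧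
      (∀ k ∈ Finset.Icc 1 ℓ, a k ∈ A k) ∧
      egAdj M₁ M₂ S EGV.src (EGV.el (b 1)) ∧
      (∀ k ∈ Finset.Icc 1 ℓ, egAdj M₁ M₂ S (EGV.el (b k)) (EGV.el (a k))) ∧
      (∀ k ∈ Finset.Icc 1 ℓ, egAdj M₁ M₂ S (EGV.el (a k)) (EGV.el (b (k + 1)))) ∧
      egAdj M₁ M₂ S (EGV.el (b (ℓ + 1))) EGV.snk := by
  obtain ⟨b, a, hb, ha, hba, hab⟩ :=
    exists_alternating_path (fun x y => egAdj M₁ M₂ S (EGV.el x) (EGV.el y)) ℓ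
      (fun k => A k) (fun k => B k) (hAug.nonempty_B hw (by simp))
      (fun _ hk _ hx => hAug.exists_egAdj_of_mem_B hS₂ hw hk hx)
      (fun _ hk _ hy => hAug.exists_egAdj_of_mem_A hS₁ hk hy)
  exact ⟨b, a, hb, ha, hAug.egAdj_src (hb 1 (by simp)), hba, hab,
    hAug.egAdj_snk (hb (ℓ + 1) (by simp))⟩

/-- Every augmenting set of positive width contains a shortest augmenting path: there are
`b_k ∈ B_k` and `a_k ∈ A_k` such that `s, b₁, a₁, b₂, …, a_ℓ, b_{ℓ+1}, t` is a directed path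
in `G(S)`. -/
theorem augset_contains_path (M₁ M₂ : FinMatroid α) (S : Finset α) (ℓ w : ℕ)
    (A B : ℕ → Finset α)
    (hS₁ : M₁.Indep S) (hS₂ : M₂.Indep S)
    (hdist : egDist M₁ M₂ S EGV.src EGV.snk = ((2 * (ℓ + 1) : ℕ) : ℕ∞))
    (hw : 1 ≤ w)
    (hAug : IsAugSet M₁ M₂ S ℓ w A B) :
    ∃ b a : ℕ → α,
      (∀ k ∈ Finset.Icc 1 (ℓ + 1), b k ∈ B k) ∧
      (∀ k ∈ Finset.Icc 1 ℓ, a k ∈ A k) ∧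
      egAdj M₁ M₂ S EGV.src (EGV.el (b 1)) ∧
      (∀ k ∈ Finset.Icc 1 ℓ, egAdj M₁ M₂ S (EGV.el (b k)) (EGV.el (a k))) ∧
      (∀ k ∈ Finset.Icc 1 ℓ, egAdj M₁ M₂ S (EGV.el (a k)) (EGV.el (b (k + 1)))) ∧
      egAdj M₁ M₂ S (EGV.el (b (ℓ + 1))) EGV.snk :=
  augset_contains_path_general M₁ M₂ S ℓ w A B hS₁ hS₂ hw hAug
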